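/- Every language accepted in real time by a general counter machine is accepted in real time by a stateless counter machine (one with a single state), possibly using more counters. Hence stateless counter machines have the same linguistic capacity as general counter machines. -/

import Mathlib

/-!
A machine with states `Fin n` and `k` counters is simulated by a stateless one with `k + n`
counters: the first `k` are the original counters, and the last `n` record the current state in
their zero-pattern. Since each step reads every zero-check, the stateless machine can recover the
simulated state, compute the original transition, and with a single update per counter make the
state counters' zero-pattern that of the next state. Acceptance reads the state back off the
same pattern.
-/

/-- A counter update: add an integer, or reset to zero (the ×0 operation). -/
inductive CUpd where
  | add (m : ℤ)
  | reset
deriving DecidableEq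

def CUpd.apply : CUpd → ℤ → ℤ
  | .add m, c => c + m
  | .reset, _ => 0

/-- A general real-time counter machine with states `Fin n` and `k` counters. -/
structure CM (σ : Type) (n k : ℕ) where
  q0 : Fin n
  u : σ → Fin n → (Fin k → Bool) → Fin k → CUpd
  δ : σ → Fin n → (Fin k → Bool) → Fin n
  F : Set (Fin n × (Fin k → Bool))

/-- Elementwise zero-check: `false` if the counter is 0, `true` otherwise. -/
def zcheck {k : ℕ} (c : Fin k → ℤ) : Fin k → Bool :=
  fun i => decide (c i ≠ 0)

def CM.step {σ : Type} {n k : ℕ} (M : CM σ n k) (cfg : Fin n × (Fin k → ℤ)) (x : σ) :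
    Fin n × (Fin k → ℤ) :=
  (M.δ x cfg.1 (zcheck cfg.2), fun i => (M.u x cfg.1 (zcheck cfg.2) i).apply (cfg.2 i))

/-- Real-time run: start at `⟨q₀, 0⟩` and take one transition per input token. -/
def CM.run {σ : Type} {n k : ℕ} (M : CM σ n k) (xs : List σ) : Fin n × (Fin k → ℤ) :=
  xs.foldl M.step (M.q0, fun _ => 0)

def CM.accepts {σ : Type} {n k : ℕ} (M : CM σ n k) (xs : List σ) : Prop :=
  ((M.run xs).1, zcheck (M.run xs).2) ∈ M.F

def CM.acceptsLang {σ : Type} {n k : ℕ} (M : CM σ n k) (L : Set (List σ)) : Prop :=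
  ∀ xs, M.accepts xs ↔ xs ∈ L

/-- An update is incremental if it is `×0` or adds a value in `{-1, 0, +1}`. -/
def CUpd.incremental : CUpd → Prop
  | .add m => m.natAbs ≤ 1
  | .reset => True

/-- A machine is simplified if its updates depend only on the input symbol and
are restricted to `{-1, +0, +1, ×0}`. -/
def CM.simplified {σ : Type} {n k : ℕ} (M : CM σ n k) : Prop :=
  (∀ x q q' b b', M.u x q b = M.u x q' b') ∧ ∀ x q b i, (M.u x q b i).incremental

/-- The class of languages accepted in real time by general counter machines. -/
def CL (σ : Type) : Set (Set (List σ)) :=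
  {L | ∃ n k, ∃ M : CM σ n k, M.acceptsLang L}

/-- The class of languages accepted in real time by stateless counter machines
(machines with a single state). -/
def QCL (σ : Type) : Set (Set (List σ)) :=
  {L | ∃ k, ∃ M : CM σ 1 k, M.acceptsLang L}

/-- The state-tracking counters are read through their zero-pattern: state `q` is recorded by the
single nonzero counter `q`, except that the initial state `q0` is recorded by the all-zero pattern
every run starts from. -/
def stateFlags {n : ℕ} (q0 q : Fin n) : Fin n → Bool :=
  fun j => decide (j = q ∧ q ≠ q0)

noncomputable def readState {n : ℕ} (q0 : Fin n) (b : Fin n → Bool) : Fin n :=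
  if h : ∃ j, b j = true then h.choose else q0

theorem readState_stateFlags {n : ℕ} (q0 q : Fin n) : readState q0 (stateFlags q0 q) = q := by
  unfold readState
  split_ifs with h
  · exact (by simpa [stateFlags] using h.choose_spec : _ ∧ _).1
  · by_contra hq
    exact h ⟨q, by simp [stateFlags, Ne.symm hq]⟩

def CUpd.setFlag (target current : Bool) : CUpd :=
  if target then (if current then .add 0 else .add 1) else .reset

theorem zcheck_apply_setFlag {m : ℕ} (c : Fin m → ℤ) (target : Fin m → Bool) :
    zcheck (fun j => (CUpd.setFlag (target j) (zcheck c j)).apply (c j)) = target := by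
  funext j
  by_cases hc : c j = 0 <;> cases ht : target j <;> simp [zcheck, CUpd.setFlag, CUpd.apply, hc, ht]

namespace CM

variable {σ : Type} {n k : ℕ}

theorem run_append_singleton (M : CM σ n k) (xs : List σ) (x : σ) :
    M.run (xs ++ [x]) = M.step (M.run xs) x := by
  simp [run, List.foldl_append]

noncomputable def stateless (M : CM σ n k) : CM σ 1 (k + n) where
  q0 := 0
  u x _ b :=
    let q := readState M.q0 (fun j => b (Fin.natAdd k j))
    let bk := fun i => b (Fin.castAdd n i)
    Fin.addCases (M.u x q bk)
      (fun j => CUpd.setFlag (stateFlags M.q0 (M.δ x q bk) j) (b (Fin.natAdd k j)))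
  δ _ _ _ := 0
  F := {p | (readState M.q0 (fun j => p.2 (Fin.natAdd k j)), fun i => p.2 (Fin.castAdd n i)) ∈ M.F}

def Encodes (M : CM σ n k) (cfg : Fin n × (Fin k → ℤ)) (c' : Fin (k + n) → ℤ) : Prop :=
  (fun i => c' (Fin.castAdd n i)) = cfg.2 ∧
    (fun j => zcheck c' (Fin.natAdd k j)) = stateFlags M.q0 cfg.1

theorem Encodes.step {M : CM σ n k} {cfg : Fin n × (Fin k → ℤ)} {c' : Fin (k + n) → ℤ}
    (h : M.Encodes cfg c') (x : σ) (s : Fin 1) :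
    M.Encodes (M.step cfg x) (M.stateless.step (s, c') x).2 := by
  obtain ⟨hcounters, hflags⟩ := h
  have hread : readState M.q0 (fun j => zcheck c' (Fin.natAdd k j)) = cfg.1 := by
    rw [hflags, readState_stateFlags]
  have hzero : (fun i => zcheck c' (Fin.castAdd n i)) = zcheck cfg.2 := by
    rw [← hcounters]; rfl
  constructor
  · funext i
    simp only [CM.step, stateless, Fin.addCases_left, hread, hzero, ← hcounters]
  · simp only [CM.step, stateless, hread, hzero]
    funext j
    simp only [zcheck, Fin.addCases_right]
    exact congrFun (zcheck_apply_setFlag (fun j => c' (Fin.natAdd k j)) _) j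

theorem encodes_run (M : CM σ n k) (xs : List σ) :
    M.Encodes (M.run xs) (M.stateless.run xs).2 := by
  induction xs using List.reverseRecOn with
  | nil =>
    refine ⟨rfl, funext fun j => ?_⟩
    simp [run, stateless, zcheck, stateFlags]
  | append_singleton xs x ih =>
    rw [run_append_singleton, run_append_singleton]
    exact ih.step x _

theorem stateless_accepts_iff (M : CM σ n k) (xs : List σ) :
    M.stateless.accepts xs ↔ M.accepts xs := by
  obtain ⟨hcounters, hflags⟩ := M.encodes_run xs
  change (readState M.q0 (fun j => zcheck (M.stateless.run xs).2 (Fin.natAdd k j)),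
    zcheck fun i => (M.stateless.run xs).2 (Fin.castAdd n i)) ∈ M.F ↔ _
  rw [hflags, readState_stateFlags, hcounters]
  rfl

end CM

/-- Stateless counter machines have the same real-time linguistic capacity as
general counter machines. -/
theorem stmt4 (σ : Type) : QCL σ = CL σ := by
  refine Set.Subset.antisymm (fun L ⟨k, M, hM⟩ => ⟨1, k, M, hM⟩) ?_
  rintro L ⟨n, k, M, hM⟩
  exact ⟨k + n, M.stateless, fun xs => (M.stateless_accepts_iff xs).trans (hM xs)⟩
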